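/- arXiv:1906.09347 — 2 statements merged into one kernel-verified Lean document; each statement's English description precedes it below -/
import Mathlib

section
/- Suppose μ₁ < μ₂ and ρ = ρ̂₂. Then t* = 1/μ₂, the infimum of g(t,s) over (t,s) ∈ (0,∞)² equals 4μ₂ and is attained at (1/μ₂, 1/μ₂); moreover g(1/μ₂,1/μ₂) = g₂(1/μ₂) = 4μ₂, and 1/μ₂ is the unique minimizer of g₂(s) = (1+μ₂s)²/s over s ∈ (0,∞). -/
open Matrix

/-- The covariance matrix of `(X₁(t), X₂(s))`. -/
noncomputable def covM (ρ t s : ℝ) : Matrix (Fin 2) (Fin 2) ℝ :=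
  !![t, ρ * min t s; ρ * min t s, s]

/-- The quadratic form `(x,y) Σ_{ts}⁻¹ (x,y)ᵀ`. -/
noncomputable def quadF (ρ t s x y : ℝ) : ℝ :=
  dotProduct ![x, y] ((covM ρ t s)⁻¹.mulVec ![x, y])

/-- `g(t,s) = inf{ (x,y) Σ_{ts}⁻¹ (x,y)ᵀ : x ≥ 1+μ₁t, y ≥ 1+μ₂s }`. -/
noncomputable def gFun (μ₁ μ₂ ρ t s : ℝ) : ℝ :=
  sInf { q : ℝ | ∃ x y : ℝ, 1 + μ₁ * t ≤ x ∧ 1 + μ₂ * s ≤ y ∧ q = quadF ρ t s x y }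

/-- `g₃(t,s)`: the quadratic form at the corner point `(1+μ₁t, 1+μ₂s)`. -/
noncomputable def g3Fun (μ₁ μ₂ ρ t s : ℝ) : ℝ :=
  quadF ρ t s (1 + μ₁ * t) (1 + μ₂ * s)

/-- `g₂(s) = (1+μ₂s)²/s`. -/
noncomputable def g2Fun (μ₂ s : ℝ) : ℝ := (1 + μ₂ * s) ^ 2 / s

/-!
Eliminating `x`, the Schur complement gives `Q(x, y) ≥ y² / s` for the quadratic form
`Q = (x, y) Σ_{ts}⁻¹ (x, y)ᵀ`, with equality when `s x = ρ min(t, s) y`. Since `y ≥ 1 + μ₂ s > 0`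
on the constraint set, `g(t, s) ≥ g₂(s) = 4 μ₂ + (1 - μ₂ s)² / s ≥ 4 μ₂`. The value `ρ = ρ̂₂` is exactly
the one for which the corner `(1 + μ₁/μ₂, 2)` of the constraint set at `t = s = 1/μ₂` satisfies the
equality condition, so there `g = g₂(1/μ₂) = 4 μ₂`.
-/

lemma quadF_eq (ρ t s x y : ℝ) :
    quadF ρ t s x y =
      (s * x ^ 2 - 2 * (ρ * min t s) * x * y + t * y ^ 2) / (t * s - (ρ * min t s) ^ 2) := by
  simp only [quadF, covM, dotProduct, mulVec, inv_def, det_fin_two_of, Ring.inverse_eq_inv',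
    adjugate_fin_two_of, Matrix.smul_apply, of_apply, cons_val', cons_val_fin_one, smul_eq_mul,
    Fin.sum_univ_two, Fin.isValue, cons_val_zero, cons_val_one, mul_neg, neg_mul]
  ring

lemma covM_det_pos {ρ t s : ℝ} (ht : 0 < t) (hs : 0 < s) (hρl : -1 < ρ) (hρu : ρ < 1) :
    0 < t * s - (ρ * min t s) ^ 2 := by
  have hρ : ρ ^ 2 < 1 := by nlinarith
  rcases le_total t s with h | h
  · rw [min_eq_left h]
    nlinarith [pow_pos ht 2, mul_le_mul_of_nonneg_left h ht.le]
  · rw [min_eq_right h]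
    nlinarith [pow_pos hs 2, mul_le_mul_of_nonneg_left h hs.le]

lemma sq_div_le_quadF {ρ t s : ℝ} (x y : ℝ) (ht : 0 < t) (hs : 0 < s) (hρl : -1 < ρ)
    (hρu : ρ < 1) : y ^ 2 / s ≤ quadF ρ t s x y := by
  rw [quadF_eq, div_le_div_iff₀ hs (covM_det_pos ht hs hρl hρu)]
  nlinarith [sq_nonneg (s * x - ρ * min t s * y)]

lemma quadF_eq_sq_div {ρ t s x y : ℝ} (hs : s ≠ 0) (hdet : t * s - (ρ * min t s) ^ 2 ≠ 0)
    (hxy : s * x = ρ * min t s * y) : quadF ρ t s x y = y ^ 2 / s := by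
  rw [quadF_eq, div_eq_div_iff hdet hs]
  linear_combination (s * x - ρ * min t s * y) * hxy

lemma g2Fun_eq (μ : ℝ) {s : ℝ} (hs : s ≠ 0) : g2Fun μ s = 4 * μ + (1 - μ * s) ^ 2 / s := by
  rw [g2Fun]
  field_simp
  ring

lemma four_mul_le_g2Fun (μ : ℝ) {s : ℝ} (hs : 0 < s) : 4 * μ ≤ g2Fun μ s := by
  rw [g2Fun_eq μ hs.ne']
  have : 0 ≤ (1 - μ * s) ^ 2 / s := by positivity
  linarith

lemma eq_inv_of_g2Fun_eq {μ s : ℝ} (hs : 0 < s) (h : g2Fun μ s = 4 * μ) : s = 1 / μ := by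
  rw [g2Fun_eq μ hs.ne', add_eq_left, div_eq_zero_iff, or_iff_left hs.ne', sq_eq_zero_iff,
    sub_eq_zero] at h
  rw [eq_div_iff (left_ne_zero_of_mul_eq_one h.symm)]
  linarith

lemma g2Fun_one_div {μ : ℝ} (hμ : μ ≠ 0) : g2Fun μ (1 / μ) = 4 * μ := by
  rw [g2Fun_eq μ (by positivity), mul_one_div_cancel hμ, sub_self]
  simp

lemma g2Fun_le_quadF {μ ρ t s : ℝ} (x : ℝ) {y : ℝ} (hμ : 0 ≤ μ) (ht : 0 < t) (hs : 0 < s)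
    (hρl : -1 < ρ) (hρu : ρ < 1) (hy : 1 + μ * s ≤ y) : g2Fun μ s ≤ quadF ρ t s x y :=
  calc g2Fun μ s = (1 + μ * s) ^ 2 / s := rfl
    _ ≤ y ^ 2 / s := by gcongr
    _ ≤ quadF ρ t s x y := sq_div_le_quadF x y ht hs hρl hρu

section gFun

variable {μ₁ μ₂ ρ t s : ℝ}

lemma g2Fun_le_gFun (hμ₂ : 0 ≤ μ₂) (ht : 0 < t) (hs : 0 < s) (hρl : -1 < ρ) (hρu : ρ < 1) :
    g2Fun μ₂ s ≤ gFun μ₁ μ₂ ρ t s := by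
  refine le_csInf ⟨_, _, _, le_rfl, le_rfl, rfl⟩ ?_
  rintro _ ⟨x, y, -, hy, rfl⟩
  exact g2Fun_le_quadF x hμ₂ ht hs hρl hρu hy

lemma gFun_le_g3Fun (hμ₂ : 0 ≤ μ₂) (ht : 0 < t) (hs : 0 < s) (hρl : -1 < ρ) (hρu : ρ < 1) :
    gFun μ₁ μ₂ ρ t s ≤ g3Fun μ₁ μ₂ ρ t s := by
  refine csInf_le ⟨g2Fun μ₂ s, ?_⟩ ⟨_, _, le_rfl, le_rfl, rfl⟩
  rintro _ ⟨x, y, -, hy, rfl⟩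
  exact g2Fun_le_quadF x hμ₂ ht hs hρl hρu hy

lemma gFun_eq_g2Fun (hμ₂ : 0 ≤ μ₂) (ht : 0 < t) (hs : 0 < s) (hρl : -1 < ρ) (hρu : ρ < 1)
    (hcorner : s * (1 + μ₁ * t) = ρ * min t s * (1 + μ₂ * s)) :
    gFun μ₁ μ₂ ρ t s = g2Fun μ₂ s := by
  refine le_antisymm ?_ (g2Fun_le_gFun hμ₂ ht hs hρl hρu)
  calc gFun μ₁ μ₂ ρ t s ≤ g3Fun μ₁ μ₂ ρ t s := gFun_le_g3Fun hμ₂ ht hs hρl hρu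
    _ = g2Fun μ₂ s :=
      quadF_eq_sq_div hs.ne' (covM_det_pos ht hs hρl hρu).ne' hcorner

end gFun

lemma sqrt_tStar_eq_one_div {μ₁ μ₂ ρ : ℝ} (hμ₂ : 0 < μ₂) (hμ₁₂ : μ₁ ≠ μ₂)
    (hρ : ρ = (μ₁ + μ₂) / (2 * μ₂)) :
    Real.sqrt (2 * (1 - ρ) / (μ₁ ^ 2 + μ₂ ^ 2 - 2 * ρ * μ₁ * μ₂)) = 1 / μ₂ := by
  have hsub : μ₂ - μ₁ ≠ 0 := sub_ne_zero.mpr hμ₁₂.symm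
  have hden : μ₁ ^ 2 + μ₂ ^ 2 - 2 * ρ * μ₁ * μ₂ = μ₂ * (μ₂ - μ₁) := by
    rw [hρ]; field_simp; ring
  have hnum : 2 * (1 - ρ) = (μ₂ - μ₁) / μ₂ := by
    rw [hρ]; field_simp; ring
  have harg : 2 * (1 - ρ) / (μ₁ ^ 2 + μ₂ ^ 2 - 2 * ρ * μ₁ * μ₂) = (1 / μ₂) ^ 2 := by
    rw [hden, hnum]
    field_simp
  rw [harg, Real.sqrt_sq (by positivity)]

theorem stmt6 (μ₁ μ₂ ρ : ℝ) (hμ1 : 0 < μ₁) (hμ12 : μ₁ < μ₂)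
    (hρl : -1 < ρ) (hρu : ρ < 1) (hρ2 : ρ = (μ₁ + μ₂) / (2 * μ₂)) :
    Real.sqrt (2 * (1 - ρ) / (μ₁ ^ 2 + μ₂ ^ 2 - 2 * ρ * μ₁ * μ₂)) = 1 / μ₂ ∧
    IsLeast { v : ℝ | ∃ t s : ℝ, 0 < t ∧ 0 < s ∧ v = gFun μ₁ μ₂ ρ t s } (4 * μ₂) ∧
    gFun μ₁ μ₂ ρ (1 / μ₂) (1 / μ₂) = 4 * μ₂ ∧
    g2Fun μ₂ (1 / μ₂) = 4 * μ₂ ∧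
    (∀ s : ℝ, 0 < s → 4 * μ₂ ≤ g2Fun μ₂ s) ∧
    (∀ s : ℝ, 0 < s → g2Fun μ₂ s = 4 * μ₂ → s = 1 / μ₂) := by
  have hμ2 : 0 < μ₂ := hμ1.trans hμ12
  have hs : 0 < 1 / μ₂ := by positivity
  have hcorner :
      1 / μ₂ * (1 + μ₁ * (1 / μ₂)) = ρ * min (1 / μ₂) (1 / μ₂) * (1 + μ₂ * (1 / μ₂)) := by
    rw [min_self, hρ2]
    field_simp
    ring
  have hval : gFun μ₁ μ₂ ρ (1 / μ₂) (1 / μ₂) = 4 * μ₂ := by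
    rw [gFun_eq_g2Fun hμ2.le hs hs hρl hρu hcorner, g2Fun_one_div hμ2.ne']
  refine ⟨sqrt_tStar_eq_one_div hμ2 hμ12.ne hρ2, ⟨⟨_, _, hs, hs, hval.symm⟩, ?_⟩, hval,
    g2Fun_one_div hμ2.ne', fun _ => four_mul_le_g2Fun μ₂, fun _ => eq_inv_of_g2Fun_eq⟩
  rintro _ ⟨t, s, ht, hs, rfl⟩
  exact (four_mul_le_g2Fun μ₂ hs).trans (g2Fun_le_gFun hμ2.le ht hs hρl hρu)
end

section
/- Suppose −1 < ρ < 0. Then the infimum of g₃(t,s) over the region Ā = {(t,s) : 0 < s ≤ t} equals 4(μ₂+(1−2ρ)μ₁), and ((1−2ρ)/μ₁, 1/(μ₂−2ρμ₁)) is the unique minimizer of g₃ on Ā. -/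
open Matrix

/-!
For `s ≤ t`, taking the Schur complement of the entry `s` of `Σ_{ts}` gives
`v Σ_{ts}⁻¹ vᵀ = y²/s + (x - ρy)²/(t - ρ²s)` for `v = (x, y)`. At the corner
`(x, y) = (1 + μ₁t, 1 + μ₂s)` completing both squares (AM-GM twice) yields, with
`D = μ₂ - 2ρμ₁`,
`g₃(t,s) = 4(μ₂ + (1-2ρ)μ₁) + (Ds - 1)²/s + (μ₁t - (1-ρ) + ρDs)²/(t - ρ²s)`.
Both squares vanish exactly at `s = 1/D`, `t = (1-2ρ)/μ₁`; for `ρ < 0` and `μ₁ ≤ μ₂`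
this point lies in the region `0 < s ≤ t`.
-/

theorem dotProduct_inv_mulVec_fin_two {a b c : ℝ} (hc : c ≠ 0) (hS : a - b ^ 2 / c ≠ 0)
    (x y : ℝ) :
    ![x, y] ⬝ᵥ (!![a, b; b, c]⁻¹ *ᵥ ![x, y]) =
      y ^ 2 / c + (x - b / c * y) ^ 2 / (a - b ^ 2 / c) := by
  have hdet : a * c - b ^ 2 ≠ 0 := by
    contrapose! hS
    field_simp
    linarith
  rw [inv_def, adjugate_fin_two_of, det_fin_two_of, Ring.inverse_eq_inv']
  simp only [dotProduct, mulVec, Fin.sum_univ_two, smul_of, of_apply, cons_val', cons_val_zero,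
    cons_val_one, empty_val', cons_val_fin_one, Pi.smul_apply, smul_eq_mul]
  field_simp
  ring

section

variable {μ₁ μ₂ ρ t s : ℝ}

theorem sub_sq_mul_pos (hs : 0 < s) (hst : s ≤ t) (hρ : ρ ^ 2 < 1) : 0 < t - ρ ^ 2 * s := by
  nlinarith

theorem quadF_eq_schur (hs : 0 < s) (hst : s ≤ t) (hρ : ρ ^ 2 < 1) (x y : ℝ) :
    quadF ρ t s x y = y ^ 2 / s + (x - ρ * y) ^ 2 / (t - ρ ^ 2 * s) := by
  have hS : t - (ρ * s) ^ 2 / s = t - ρ ^ 2 * s := by field_simp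
  rw [quadF, covM, min_eq_right hst,
    dotProduct_inv_mulVec_fin_two hs.ne' (hS ▸ (sub_sq_mul_pos hs hst hρ).ne'), hS,
    mul_div_cancel_right₀ _ hs.ne']

theorem g3Fun_eq_add_sq_div (hs : 0 < s) (hst : s ≤ t) (hρ : ρ ^ 2 < 1) :
    g3Fun μ₁ μ₂ ρ t s = 4 * (μ₂ + (1 - 2 * ρ) * μ₁) + ((μ₂ - 2 * ρ * μ₁) * s - 1) ^ 2 / s
      + (μ₁ * t - (1 - ρ) + ρ * (μ₂ - 2 * ρ * μ₁) * s) ^ 2 / (t - ρ ^ 2 * s) := by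
  have hne : t - s * ρ ^ 2 ≠ 0 := by linarith [sub_sq_mul_pos hs hst hρ]
  rw [g3Fun, quadF_eq_schur hs hst hρ]
  field_simp
  ring

theorem le_g3Fun (hs : 0 < s) (hst : s ≤ t) (hρ : ρ ^ 2 < 1) :
    4 * (μ₂ + (1 - 2 * ρ) * μ₁) ≤ g3Fun μ₁ μ₂ ρ t s := by
  have := sub_sq_mul_pos hs hst hρ
  rw [g3Fun_eq_add_sq_div hs hst hρ, add_assoc]
  exact le_add_of_nonneg_right (by positivity)

theorem eq_of_g3Fun_eq (hμ₁ : μ₁ ≠ 0) (hs : 0 < s) (hst : s ≤ t) (hρ : ρ ^ 2 < 1)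
    (h : g3Fun μ₁ μ₂ ρ t s = 4 * (μ₂ + (1 - 2 * ρ) * μ₁)) :
    t = (1 - 2 * ρ) / μ₁ ∧ s = 1 / (μ₂ - 2 * ρ * μ₁) := by
  have hu := sub_sq_mul_pos hs hst hρ
  rw [g3Fun_eq_add_sq_div hs hst hρ, add_assoc, add_eq_left,
    add_eq_zero_iff_of_nonneg (by positivity) (by positivity)] at h
  obtain ⟨hs₀, ht₀⟩ := h
  rw [div_eq_zero_iff, or_iff_left hs.ne', sq_eq_zero_iff, sub_eq_zero] at hs₀
  rw [div_eq_zero_iff, or_iff_left hu.ne', sq_eq_zero_iff, mul_assoc, hs₀] at ht₀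
  exact ⟨eq_div_of_mul_eq hμ₁ (by linarith), eq_one_div_of_mul_eq_one_right hs₀⟩

theorem g3Fun_minimizer_mem (hμ₁ : 0 < μ₁) (hμ₁₂ : μ₁ ≤ μ₂) (hρ : ρ < 0) :
    0 < 1 / (μ₂ - 2 * ρ * μ₁) ∧ 1 / (μ₂ - 2 * ρ * μ₁) ≤ (1 - 2 * ρ) / μ₁ := by
  have hD : 0 < μ₂ - 2 * ρ * μ₁ := by nlinarith
  refine ⟨by positivity, ?_⟩
  rw [div_le_div_iff₀ hD hμ₁]
  nlinarith

theorem g3Fun_minimizer (hμ₁ : 0 < μ₁) (hμ₁₂ : μ₁ ≤ μ₂) (hρ : ρ < 0) (hρ₂ : ρ ^ 2 < 1) :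
    g3Fun μ₁ μ₂ ρ ((1 - 2 * ρ) / μ₁) (1 / (μ₂ - 2 * ρ * μ₁)) = 4 * (μ₂ + (1 - 2 * ρ) * μ₁) := by
  obtain ⟨hs, hst⟩ := g3Fun_minimizer_mem hμ₁ hμ₁₂ hρ
  have hD : μ₂ - 2 * ρ * μ₁ ≠ 0 := (one_div_pos.mp hs).ne'
  rw [g3Fun_eq_add_sq_div hs hst hρ₂, mul_div_cancel₀ _ hμ₁.ne', mul_one_div_cancel hD, mul_assoc ρ,
    mul_one_div_cancel hD]
  rw [show 1 - 2 * ρ - (1 - ρ) + ρ * 1 = 0 by ring]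
  simp

end

theorem stmt10 (μ₁ μ₂ ρ : ℝ) (hμ1 : 0 < μ₁) (hμ12 : μ₁ ≤ μ₂)
    (hρl : -1 < ρ) (hρu : ρ < 0) :
    IsLeast { v : ℝ | ∃ t s : ℝ, 0 < s ∧ s ≤ t ∧ v = g3Fun μ₁ μ₂ ρ t s }
      (4 * (μ₂ + (1 - 2 * ρ) * μ₁)) ∧
    (g3Fun μ₁ μ₂ ρ ((1 - 2 * ρ) / μ₁) (1 / (μ₂ - 2 * ρ * μ₁))
        = 4 * (μ₂ + (1 - 2 * ρ) * μ₁)) ∧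
    (∀ t s : ℝ, 0 < s → s ≤ t →
      g3Fun μ₁ μ₂ ρ t s = 4 * (μ₂ + (1 - 2 * ρ) * μ₁) →
      t = (1 - 2 * ρ) / μ₁ ∧ s = 1 / (μ₂ - 2 * ρ * μ₁)) := by
  have hρ : ρ ^ 2 < 1 := by nlinarith
  obtain ⟨hs, hst⟩ := g3Fun_minimizer_mem hμ1 hμ12 hρu
  have hval := g3Fun_minimizer hμ1 hμ12 hρu hρ
  refine ⟨⟨⟨_, _, hs, hst, hval.symm⟩, ?_⟩, hval,
    fun t s hs hst h => eq_of_g3Fun_eq hμ1.ne' hs hst hρ h⟩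
  rintro v ⟨t, s, hs, hst, rfl⟩
  exact le_g3Fun hs hst hρ
end
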